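/- arXiv:math/0612086 — 5 statements merged into one kernel-verified Lean document; each statement's English description precedes it below -/
import Mathlib

section
/- For all u, v, x, y ∈ ℂ, ϑ(u+x)ϑ(u-x)ϑ(v+y)ϑ(v-y) = ϑ(u+y)ϑ(u-y)ϑ(v+x)ϑ(v-x) + ϑ(u+v)ϑ(u-v)ϑ(x+y)ϑ(x-y). -/
open scoped BigOperators Kronecker TensorProduct
open Complex

noncomputable section

namespace EtauEta

/-- Jacobi's theta function `ϑ(u) = -∑_{j∈ℤ} exp(πi(j+1/2)²τ + 2πi(j+1/2)(u+1/2))`. -/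
def th (τ u : ℂ) : ℂ :=
  -∑' j : ℤ, Complex.exp ((Real.pi : ℂ) * Complex.I * ((j : ℂ) + 1/2)^2 * τ +
      2 * (Real.pi : ℂ) * Complex.I * ((j : ℂ) + 1/2) * (u + 1/2))

namespace ThetaAux

/-- index type for quadruple sums -/
abbrev N := (ℤ × ℤ) × (ℤ × ℤ)

/-- term of the theta series -/
def f (τ w : ℂ) (j : ℤ) : ℂ :=
  Complex.exp ((Real.pi : ℂ) * Complex.I * ((j : ℂ) + 1/2)^2 * τ +
      2 * (Real.pi : ℂ) * Complex.I * ((j : ℂ) + 1/2) * (w + 1/2))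

lemma th_eq (τ w : ℂ) : th τ w = -∑' j : ℤ, f τ w j := rfl

lemma f_eq (τ w : ℂ) (j : ℤ) :
    f τ w j = Complex.exp ((Real.pi:ℂ) * Complex.I * τ / 4 + (Real.pi:ℂ) * Complex.I * (w + 1/2)) *
      jacobiTheta₂_term j (w + 1/2 + τ/2) τ := by
  rw [f, jacobiTheta₂_term, ← Complex.exp_add]
  congr 1
  ring

lemma summable_norm_f {τ : ℂ} (hτ : 0 < τ.im) (w : ℂ) :
    Summable fun j : ℤ => ‖f τ w j‖ := by
  simp_rw [f_eq, norm_mul]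
  apply Summable.mul_left
  refine (summable_pow_mul_jacobiTheta₂_term_bound |(w + 1/2 + τ/2).im| hτ 0).of_nonneg_of_le
    (fun _ => norm_nonneg _) (fun n => ?_)
  simpa using norm_jacobiTheta₂_term_le (τ := τ) (z := w + 1/2 + τ/2) hτ le_rfl le_rfl n

/-- product of four theta terms -/
def F (τ w₁ w₂ w₃ w₄ : ℂ) (n : N) : ℂ :=
  (f τ w₁ n.1.1 * f τ w₂ n.1.2) * (f τ w₃ n.2.1 * f τ w₄ n.2.2)

lemma summable_norm_F {τ : ℂ} (hτ : 0 < τ.im) (w₁ w₂ w₃ w₄ : ℂ) :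
    Summable fun n : N => ‖F τ w₁ w₂ w₃ w₄ n‖ := by
  have h12 := (summable_norm_f hτ w₁).mul_norm (summable_norm_f hτ w₂)
  have h34 := (summable_norm_f hτ w₃).mul_norm (summable_norm_f hτ w₄)
  have h := Summable.mul_norm (R := ℂ) h12 h34
  exact h

lemma prod_th_eq {τ : ℂ} (hτ : 0 < τ.im) (w₁ w₂ w₃ w₄ : ℂ) :
    th τ w₁ * th τ w₂ * th τ w₃ * th τ w₄ = ∑' n : N, F τ w₁ w₂ w₃ w₄ n := by
  have e12 : (∑' j : ℤ, f τ w₁ j) * (∑' j : ℤ, f τ w₂ j)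
      = ∑' p : ℤ × ℤ, f τ w₁ p.1 * f τ w₂ p.2 :=
    tsum_mul_tsum_of_summable_norm (summable_norm_f hτ w₁) (summable_norm_f hτ w₂)
  have e34 : (∑' j : ℤ, f τ w₃ j) * (∑' j : ℤ, f τ w₄ j)
      = ∑' p : ℤ × ℤ, f τ w₃ p.1 * f τ w₄ p.2 :=
    tsum_mul_tsum_of_summable_norm (summable_norm_f hτ w₃) (summable_norm_f hτ w₄)
  have e : (∑' p : ℤ × ℤ, f τ w₁ p.1 * f τ w₂ p.2) * (∑' p : ℤ × ℤ, f τ w₃ p.1 * f τ w₄ p.2)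
      = ∑' n : N, F τ w₁ w₂ w₃ w₄ n :=
    tsum_mul_tsum_of_summable_norm
      ((summable_norm_f hτ w₁).mul_norm (summable_norm_f hτ w₂))
      ((summable_norm_f hτ w₃).mul_norm (summable_norm_f hτ w₄))
  calc th τ w₁ * th τ w₂ * th τ w₃ * th τ w₄
      = ((∑' j : ℤ, f τ w₁ j) * (∑' j : ℤ, f τ w₂ j)) *
        ((∑' j : ℤ, f τ w₃ j) * (∑' j : ℤ, f τ w₄ j)) := by
        rw [th_eq, th_eq, th_eq, th_eq]; ring
    _ = (∑' p : ℤ × ℤ, f τ w₁ p.1 * f τ w₂ p.2) * (∑' p : ℤ × ℤ, f τ w₃ p.1 * f τ w₄ p.2) := by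
        rw [e12, e34]
    _ = ∑' n : N, F τ w₁ w₂ w₃ w₄ n := e

/-- the "Gaussian" part of the quadruple sum -/
def Zf (τ u x v y : ℂ) (n : N) : ℂ :=
  (Real.pi:ℂ) * Complex.I * τ *
      (((n.1.1:ℂ)^2 + (n.1.2:ℂ)^2 + (n.2.1:ℂ)^2 + (n.2.2:ℂ)^2)/2) +
    2 * (Real.pi:ℂ) * Complex.I *
      ((n.1.1:ℂ) * u + (n.1.2:ℂ) * x + (n.2.1:ℂ) * v + (n.2.2:ℂ) * y)

def g1 (τ u x v y : ℂ) (n : N) : ℂ :=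
  if Odd (n.1.1 + n.1.2) ∧ Odd (n.2.1 + n.2.2) then
    Complex.exp (Zf τ u x v y n + (Real.pi:ℂ) * Complex.I * ((n.1.1 + n.2.1 : ℤ) : ℂ)) else 0

def g2 (τ u x v y : ℂ) (n : N) : ℂ :=
  if Odd (n.1.1 + n.2.2) ∧ Odd (n.1.2 + n.2.1) then
    Complex.exp (Zf τ u x v y n + (Real.pi:ℂ) * Complex.I * ((n.1.1 + n.2.1 : ℤ) : ℂ)) else 0

def g3 (τ u x v y : ℂ) (n : N) : ℂ :=
  if Odd (n.1.1 + n.2.1) ∧ Odd (n.1.2 + n.2.2) then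
    Complex.exp (Zf τ u x v y n + (Real.pi:ℂ) * Complex.I * ((n.1.1 + n.1.2 : ℤ) : ℂ)) else 0

def e1 (j : N) : N := ((j.1.1 + j.1.2 + 1, j.1.1 - j.1.2), (j.2.1 + j.2.2 + 1, j.2.1 - j.2.2))
def e2 (j : N) : N := ((j.1.1 + j.1.2 + 1, j.2.1 - j.2.2), (j.2.1 + j.2.2 + 1, j.1.1 - j.1.2))
def e3 (j : N) : N := ((j.1.1 + j.1.2 + 1, j.2.1 + j.2.2 + 1), (j.1.1 - j.1.2, j.2.1 - j.2.2))

lemma e1_inj : Function.Injective e1 := by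
  rintro ⟨⟨a, b⟩, c, d⟩ ⟨⟨a', b'⟩, c', d'⟩ h
  simp only [e1, Prod.mk.injEq] at h ⊢
  omega

lemma e2_inj : Function.Injective e2 := by
  rintro ⟨⟨a, b⟩, c, d⟩ ⟨⟨a', b'⟩, c', d'⟩ h
  simp only [e2, Prod.mk.injEq] at h ⊢
  omega

lemma e3_inj : Function.Injective e3 := by
  rintro ⟨⟨a, b⟩, c, d⟩ ⟨⟨a', b'⟩, c', d'⟩ h
  simp only [e3, Prod.mk.injEq] at h ⊢
  omega

variable (τ u v x y : ℂ)

lemma g1_support : ∀ n ∉ Set.range e1, g1 τ u x v y n = 0 := by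
  rintro ⟨⟨a, b⟩, c, d⟩ hn
  rw [g1, if_neg]
  rintro ⟨⟨p, hp⟩, q, hq⟩
  simp only at hp hq
  exact hn ⟨((p, a - p - 1), (q, c - q - 1)), by simp only [e1, Prod.mk.injEq]; omega⟩

lemma g2_support : ∀ n ∉ Set.range e2, g2 τ u x v y n = 0 := by
  rintro ⟨⟨a, b⟩, c, d⟩ hn
  rw [g2, if_neg]
  rintro ⟨⟨p, hp⟩, q, hq⟩
  simp only at hp hq
  exact hn ⟨((p, a - p - 1), (q, c - q - 1)), by simp only [e2, Prod.mk.injEq]; omega⟩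

lemma g3_support : ∀ n ∉ Set.range e3, g3 τ u x v y n = 0 := by
  rintro ⟨⟨a, b⟩, c, d⟩ hn
  rw [g3, if_neg]
  rintro ⟨⟨p, hp⟩, q, hq⟩
  simp only at hp hq
  exact hn ⟨((p, a - p - 1), (q, b - q - 1)), by simp only [e3, Prod.mk.injEq]; omega⟩

lemma F_eq_g1 (j : N) :
    F τ (u + x) (u - x) (v + y) (v - y) j = g1 τ u x v y (e1 j) := by
  obtain ⟨⟨a, b⟩, c, d⟩ := j
  rw [g1, if_pos ⟨⟨a, by simp only [e1]; ring⟩, ⟨c, by simp only [e1]; ring⟩⟩]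
  rw [F, f, f, f, f, ← Complex.exp_add, ← Complex.exp_add, ← Complex.exp_add]
  congr 1
  simp only [e1, Zf]
  push_cast
  ring

lemma F_eq_g2 (j : N) :
    F τ (u + y) (u - y) (v + x) (v - x) j = g2 τ u x v y (e2 j) := by
  obtain ⟨⟨a, b⟩, c, d⟩ := j
  rw [g2, if_pos ⟨⟨a, by simp only [e2]; ring⟩, ⟨c, by simp only [e2]; ring⟩⟩]
  rw [F, f, f, f, f, ← Complex.exp_add, ← Complex.exp_add, ← Complex.exp_add]
  congr 1
  simp only [e2, Zf]
  push_cast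
  ring

lemma F_eq_g3 (j : N) :
    F τ (u + v) (u - v) (x + y) (x - y) j = g3 τ u x v y (e3 j) := by
  obtain ⟨⟨a, b⟩, c, d⟩ := j
  rw [g3, if_pos ⟨⟨a, by simp only [e3]; ring⟩, ⟨c, by simp only [e3]; ring⟩⟩]
  rw [F, f, f, f, f, ← Complex.exp_add, ← Complex.exp_add, ← Complex.exp_add]
  congr 1
  simp only [e3, Zf]
  push_cast
  ring

lemma exp_shift_even (Z : ℂ) {a b : ℤ} (h : Even (a - b)) :
    Complex.exp (Z + (Real.pi:ℂ) * Complex.I * (a : ℂ)) =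
      Complex.exp (Z + (Real.pi:ℂ) * Complex.I * (b : ℂ)) := by
  obtain ⟨c, hc⟩ := h
  have hb : (a : ℂ) = (b : ℂ) + 2 * (c : ℂ) := by
    have : a = b + (c + c) := by omega
    rw [this]; push_cast; ring
  rw [hb, show Z + (Real.pi:ℂ) * Complex.I * ((b:ℂ) + 2 * (c:ℂ))
      = (Z + (Real.pi:ℂ) * Complex.I * (b:ℂ)) + (c:ℂ) * (2 * (Real.pi:ℂ) * Complex.I) by ring,
    Complex.exp_add, Complex.exp_int_mul_two_pi_mul_I, mul_one]

lemma exp_shift_odd (Z : ℂ) {a b : ℤ} (h : Odd (a - b)) :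
    Complex.exp (Z + (Real.pi:ℂ) * Complex.I * (a : ℂ)) =
      -Complex.exp (Z + (Real.pi:ℂ) * Complex.I * (b : ℂ)) := by
  obtain ⟨c, hc⟩ := h
  have hb : (a : ℂ) = (b : ℂ) + 2 * (c : ℂ) + 1 := by
    have : a = b + (2 * c + 1) := by omega
    rw [this]; push_cast; ring
  rw [hb, show Z + (Real.pi:ℂ) * Complex.I * ((b:ℂ) + 2 * (c:ℂ) + 1)
      = ((Z + (Real.pi:ℂ) * Complex.I * (b:ℂ)) + (Real.pi:ℂ) * Complex.I)
        + (c:ℂ) * (2 * (Real.pi:ℂ) * Complex.I) by ring,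
    Complex.exp_add, Complex.exp_int_mul_two_pi_mul_I, mul_one, Complex.exp_add,
    Complex.exp_pi_mul_I]
  ring

lemma g_eq (n : N) :
    g1 τ u x v y n = g2 τ u x v y n + g3 τ u x v y n := by
  obtain ⟨⟨a, b⟩, c, d⟩ := n
  simp only [g1, g2, g3]
  have K : ∀ {p q : ℤ}, Even (p + q) → ¬ Odd (p + q) := fun h => Int.not_odd_iff_even.mpr h
  set Z := Zf τ u x v y ((a, b), (c, d)) with hZ
  rcases Int.even_or_odd a with ha | ha <;> rcases Int.even_or_odd b with hb | hb <;>
    rcases Int.even_or_odd c with hc | hc <;> rcases Int.even_or_odd d with hd | hd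
  · rw [if_neg fun h => K (ha.add hb) h.1, if_neg fun h => K (ha.add hd) h.1,
      if_neg fun h => K (ha.add hc) h.1]; ring
  · rw [if_neg fun h => K (ha.add hb) h.1, if_neg fun h => K (hb.add hc) h.2,
      if_neg fun h => K (ha.add hc) h.1]; ring
  · rw [if_neg fun h => K (ha.add hb) h.1, if_neg fun h => K (ha.add hd) h.1,
      if_neg fun h => K (hb.add hd) h.2]; ring
  · rw [if_neg fun h => K (ha.add hb) h.1, if_pos ⟨ha.add_odd hd, hb.add_odd hc⟩,
      if_pos ⟨ha.add_odd hc, hb.add_odd hd⟩,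
      exp_shift_odd Z (show Odd (a + c - (a + b)) by
        rw [show a + c - (a + b) = c - b by ring]; exact hc.sub_even hb)]; ring
  · rw [if_neg fun h => K (hc.add hd) h.2, if_neg fun h => K (ha.add hd) h.1,
      if_neg fun h => K (ha.add hc) h.1]; ring
  · rw [if_pos ⟨ha.add_odd hb, hc.add_odd hd⟩, if_pos ⟨ha.add_odd hd, hb.add_even hc⟩,
      if_neg fun h => K (ha.add hc) h.1]; ring
  · rw [if_pos ⟨ha.add_odd hb, hc.add_even hd⟩, if_neg fun h => K (ha.add hd) h.1,
      if_pos ⟨ha.add_odd hc, hb.add_even hd⟩,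
      exp_shift_even Z (show Even (a + c - (a + b)) by
        rw [show a + c - (a + b) = c - b by ring]; exact hc.sub_odd hb)]; ring
  · rw [if_neg fun h => K (hc.add_odd hd) h.2, if_neg fun h => K (hb.add_odd hc) h.2,
      if_neg fun h => K (hb.add_odd hd) h.2]; ring
  · rw [if_neg fun h => K (hc.add hd) h.2, if_neg fun h => K (hb.add hc) h.2,
      if_neg fun h => K (hb.add hd) h.2]; ring
  · rw [if_pos ⟨ha.add_even hb, hc.add_odd hd⟩, if_neg fun h => K (ha.add_odd hd) h.1,
      if_pos ⟨ha.add_even hc, hb.add_odd hd⟩,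
      exp_shift_even Z (show Even (a + c - (a + b)) by
        rw [show a + c - (a + b) = c - b by ring]; exact hc.sub hb)]; ring
  · rw [if_pos ⟨ha.add_even hb, hc.add_even hd⟩, if_pos ⟨ha.add_even hd, hb.add_odd hc⟩,
      if_neg fun h => K (ha.add_odd hc) h.1]; ring
  · rw [if_neg fun h => K (hc.add_odd hd) h.2, if_neg fun h => K (ha.add_odd hd) h.1,
      if_neg fun h => K (ha.add_odd hc) h.1]; ring
  · rw [if_neg fun h => K (ha.add_odd hb) h.1, if_pos ⟨ha.add_even hd, hb.add_even hc⟩,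
      if_pos ⟨ha.add_even hc, hb.add_even hd⟩,
      exp_shift_odd Z (show Odd (a + c - (a + b)) by
        rw [show a + c - (a + b) = c - b by ring]; exact hc.sub_odd hb)]; ring
  · rw [if_neg fun h => K (ha.add_odd hb) h.1, if_neg fun h => K (ha.add_odd hd) h.1,
      if_neg fun h => K (hb.add_odd hd) h.2]; ring
  · rw [if_neg fun h => K (ha.add_odd hb) h.1, if_neg fun h => K (hb.add_odd hc) h.2,
      if_neg fun h => K (ha.add_odd hc) h.1]; ring
  · rw [if_neg fun h => K (ha.add_odd hb) h.1, if_neg fun h => K (ha.add_odd hd) h.1,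
      if_neg fun h => K (ha.add_odd hc) h.1]; ring

end ThetaAux

open ThetaAux in
/-- the four-term theta identity. -/
theorem theta_identity (τ : ℂ) (hτ : 0 < τ.im) (u v x y : ℂ) :
    th τ (u + x) * th τ (u - x) * th τ (v + y) * th τ (v - y) =
      th τ (u + y) * th τ (u - y) * th τ (v + x) * th τ (v - x) +
        th τ (u + v) * th τ (u - v) * th τ (x + y) * th τ (x - y) := by
  -- rewrite the three quadruple products as sums over N
  rw [prod_th_eq hτ (u + x) (u - x) (v + y) (v - y),
      prod_th_eq hτ (u + y) (u - y) (v + x) (v - x),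
      prod_th_eq hτ (u + v) (u - v) (x + y) (x - y)]
  -- pass to the reindexed sums g1, g2, g3
  have h1 : (∑' n : N, F τ (u + x) (u - x) (v + y) (v - y) n) = ∑' n : N, g1 τ u x v y n := by
    rw [tsum_congr (F_eq_g1 τ u v x y)]
    have hsup : Function.support (g1 τ u x v y) ⊆ Set.range e1 := fun n hn => by
      by_contra h
      exact hn (g1_support τ u v x y n h)
    exact e1_inj.tsum_eq hsup
  have h2 : (∑' n : N, F τ (u + y) (u - y) (v + x) (v - x) n) = ∑' n : N, g2 τ u x v y n := by
    rw [tsum_congr (F_eq_g2 τ u v x y)]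
    have hsup : Function.support (g2 τ u x v y) ⊆ Set.range e2 := fun n hn => by
      by_contra h
      exact hn (g2_support τ u v x y n h)
    exact e2_inj.tsum_eq hsup
  have h3 : (∑' n : N, F τ (u + v) (u - v) (x + y) (x - y) n) = ∑' n : N, g3 τ u x v y n := by
    rw [tsum_congr (F_eq_g3 τ u v x y)]
    have hsup : Function.support (g3 τ u x v y) ⊆ Set.range e3 := fun n hn => by
      by_contra h
      exact hn (g3_support τ u v x y n h)
    exact e3_inj.tsum_eq hsup
  rw [h1, h2, h3]
  -- summability of g2, g3
  have hg2 : Summable (g2 τ u x v y) := by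
    rw [← e2_inj.summable_iff (g2_support τ u v x y)]
    have : (g2 τ u x v y ∘ e2) = F τ (u + y) (u - y) (v + x) (v - x) :=
      funext fun j => (F_eq_g2 τ u v x y j).symm
    rw [this]
    exact (summable_norm_F hτ (u + y) (u - y) (v + x) (v - x)).of_norm
  have hg3 : Summable (g3 τ u x v y) := by
    rw [← e3_inj.summable_iff (g3_support τ u v x y)]
    have : (g3 τ u x v y ∘ e3) = F τ (u + v) (u - v) (x + y) (x - y) :=
      funext fun j => (F_eq_g3 τ u v x y j).symm
    rw [this]
    exact (summable_norm_F hτ (u + v) (u - v) (x + y) (x - y)).of_norm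
  -- termwise identity
  rw [tsum_congr (g_eq τ u v x y)]
  exact Summable.tsum_add hg2 hg3

end EtauEta
end
end

section
/- For all u and all q at which both sides are defined, (ε(q,−u)·γ(q,−q,−u) + γ(q,η,−u)·γ(η,−q,−u)) / (g(−u)·γ(q,−q,−u)) = ϑ(u+η)ϑ(u−2η)/(ϑ(u−η)ϑ(u+2η)); in particular the left-hand side is independent of q. -/
open scoped BigOperators Kronecker TensorProduct
open Complex

noncomputable section

namespace EtauEta

variable (τ η : ℂ)

/-- `g(u)`. -/
def gf (u : ℂ) : ℂ := th τ (u - η) * th τ (u - 2*η) / (th τ η * th τ (2*η))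

/-- `α(q₁,q₂,u)`. -/
def af (q₁ q₂ u : ℂ) : ℂ := th τ (η - u) * th τ (q₁ + q₂ - u) / (th τ η * th τ (q₁ + q₂))

/-- `β(q₁,q₂,u)`. -/
def bf (q₁ q₂ u : ℂ) : ℂ :=
  th τ (η - u) * th τ u * th τ (q₁ + q₂ - 2*η) / (th τ (-(2*η)) * th τ η * th τ (q₁ + q₂))

/-- `ε(q,u)`. -/
def ef (q u : ℂ) : ℂ :=
  th τ (η + u) * th τ (2*η - u) / (th τ η * th τ (2*η)) -
    th τ u * th τ (η - u) / (th τ η * th τ (2*η)) *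
      (th τ (q + η) * th τ (q - 2*η) / (th τ (q - η) * th τ q) +
       th τ (q - η) * th τ (q + 2*η) / (th τ (q + η) * th τ q))

/-- `γ(q₁,q₂,u)`. -/
def cf (q₁ q₂ u : ℂ) : ℂ :=
  th τ u * th τ (q₁ + q₂ - η - u) * th τ (q₁ - 2*η) * th τ (q₂ + η) /
    (th τ η * th τ (q₁ + q₂ - 2*η) * th τ (q₁ + η) * th τ q₂)

/-- `δ(q,u)`. -/
def df (q u : ℂ) : ℂ := th τ (u - q) * th τ (u - q + η) / (th τ q * th τ (q - η))

/-- `ω(u) = ϑ(u+η)ϑ(u−2η)/(ϑ(u−η)ϑ(u+2η))`. -/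
def om (u : ℂ) : ℂ := th τ (u + η) * th τ (u - 2*η) / (th τ (u - η) * th τ (u + 2*η))

/-- `y(x,u) = γ(x,−x,u)/γ(x,η,u)`. -/
def yf (x u : ℂ) : ℂ := cf τ η x (-x) u / cf τ η x η u

/-- `z(x,u) = g(u)/β(x,η,u)`. -/
def zf (x u : ℂ) : ℂ := gf τ η u / bf τ η x η u

/-- Genericity of `η`: `ϑ` does not vanish at nonzero integer multiples of `η`. -/
def genEta : Prop := ∀ m : ℤ, m ≠ 0 → th τ ((m : ℂ) * η) ≠ 0

/-- Genericity of a parameter `x`: `ϑ` does not vanish on `±x + ℤη`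
(this makes all the denominators involving `x` nonzero). -/
def genAt (x : ℂ) : Prop :=
  ∀ m : ℤ, th τ (x + (m : ℂ) * η) ≠ 0 ∧ th τ (-x + (m : ℂ) * η) ≠ 0

/-!
Everything reduces to Weierstrass's three-term identity
`ϑ(x+y)ϑ(x-y)ϑ(a+b)ϑ(a-b) = ϑ(x+a)ϑ(x-a)ϑ(y+b)ϑ(y-b) - ϑ(x+b)ϑ(x-b)ϑ(y+a)ϑ(y-a)`.
It holds because splitting the double series of `ϑ(s+w)ϑ(s-w)` by the parity of the difference
of the two summation indices writes this product as `B(2s)A(2w) - A(2s)B(2w)`, with `A`, `B`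
the theta series of nome `2τ` and characteristics `1/2`, `0`.

The `q`-dependence of `ε(q,-u)` is only through `r_η(q) + r_{-η}(q)`, where
`r_η(x) = ϑ(x+η)ϑ(x-2η)/(ϑ(x-η)ϑ(x))`. Two instances of the three-term identity give
`(r_η + r_{-η})(q) - (r_η + r_{-η})(u) = ϑ(2η)²ϑ(q+u)ϑ(q-u)/(ϑ(q-η)ϑ(q+η)ϑ(u-η)ϑ(u+η))`,
and this difference is exactly cancelled by `γ(q,η,-u)γ(η,-q,-u)`. Hence the numerator is
`ε(u,-u)γ(q,-q,-u)`, and `ε(u,-u)/g(-u)` simplifies to the right-hand side.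
-/

def thTerm (t c z : ℂ) (j : ℤ) : ℂ :=
  exp ((Real.pi : ℂ) * I * t * ((j : ℂ) + c) ^ 2 + 2 * (Real.pi : ℂ) * I * ((j : ℂ) + c) * z)

theorem thTerm_eq_mul_jacobiTheta₂_term (t c z : ℂ) (j : ℤ) :
    thTerm t c z j = exp ((Real.pi : ℂ) * I * t * c ^ 2 + 2 * (Real.pi : ℂ) * I * c * z) *
      jacobiTheta₂_term j (z + c * t) t := by
  rw [thTerm, jacobiTheta₂_term, ← exp_add]
  ring_nf

theorem summable_norm_thTerm {t : ℂ} (ht : 0 < t.im) (c z : ℂ) :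
    Summable fun j : ℤ => ‖thTerm t c z j‖ := by
  simp only [thTerm_eq_mul_jacobiTheta₂_term, norm_mul]
  refine .mul_left _ (.of_nonneg_of_le (fun _ => norm_nonneg _)
    (norm_jacobiTheta₂_term_le ht le_rfl le_rfl) ?_)
  simpa only [pow_zero, one_mul] using summable_pow_mul_jacobiTheta₂_term_bound _ ht 0

theorem thTerm_add_one (t c z : ℂ) (j : ℤ) :
    thTerm t c (z + 1) j = exp (2 * (Real.pi : ℂ) * I * c) * thTerm t c z j := by
  have h : (Real.pi : ℂ) * I * t * ((j : ℂ) + c) ^ 2 +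
      2 * (Real.pi : ℂ) * I * ((j : ℂ) + c) * (z + 1) =
      2 * (Real.pi : ℂ) * I * c + ((Real.pi : ℂ) * I * t * ((j : ℂ) + c) ^ 2 +
        2 * (Real.pi : ℂ) * I * ((j : ℂ) + c) * z) + j * (2 * Real.pi * I) := by ring
  rw [thTerm, h, exp_add, exp_add, exp_int_mul_two_pi_mul_I, mul_one, thTerm]

theorem thTerm_half_neg (t z : ℂ) (j : ℤ) :
    thTerm t (1/2) (-z) (-j - 1) = thTerm t (1/2) z j := by
  rw [thTerm, thTerm]
  push_cast
  ring_nf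

theorem th_eq_neg_tsum_thTerm (t x : ℂ) : th t x = -∑' j : ℤ, thTerm t (1/2) (x + 1/2) j := by
  simp only [th, thTerm]
  congr 2 with j
  ring_nf

theorem th_neg (t x : ℂ) : th t (-x) = -th t x := by
  have hshift (j : ℤ) : thTerm t (1/2) (x + 1/2) j = -thTerm t (1/2) (x - 1/2) j := by
    rw [show x + 1/2 = x - 1/2 + 1 by ring, thTerm_add_one,
      show 2 * (Real.pi : ℂ) * I * (1/2) = Real.pi * I by ring, exp_pi_mul_I, neg_one_mul]
  have hreindex :
      ∑' j : ℤ, thTerm t (1/2) (-x + 1/2) j = ∑' j : ℤ, thTerm t (1/2) (x - 1/2) j := by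
    rw [← ((Equiv.neg ℤ).trans (Equiv.subRight 1)).tsum_eq]
    refine tsum_congr fun j => ?_
    rw [show -x + 1/2 = -(x - 1/2) by ring]
    exact thTerm_half_neg t _ j
  rw [th_eq_neg_tsum_thTerm, th_eq_neg_tsum_thTerm, hreindex, tsum_congr hshift, tsum_neg,
    neg_neg]

def thetaInt (t v : ℂ) : ℂ := ∑' j : ℤ, thTerm (2 * t) 0 v j

def thetaHalf (t v : ℂ) : ℂ := ∑' j : ℤ, thTerm (2 * t) (1/2) v j

theorem thetaInt_add_one (t v : ℂ) : thetaInt t (v + 1) = thetaInt t v := by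
  simp only [thetaInt, thTerm_add_one, mul_zero, exp_zero, one_mul]

theorem thetaHalf_add_one (t v : ℂ) : thetaHalf t (v + 1) = -thetaHalf t v := by
  simp only [thetaHalf, thTerm_add_one, show 2 * (Real.pi : ℂ) * I * (1/2) = Real.pi * I by ring,
    exp_pi_mul_I, neg_one_mul, tsum_neg]

def parityEquiv : (ℤ × ℤ) ⊕ (ℤ × ℤ) ≃ ℤ × ℤ where
  toFun := Sum.elim (fun p => (p.1 + p.2, p.1 - p.2)) (fun p => (p.1 + p.2, p.1 - p.2 - 1))
  invFun p := if (p.1 - p.2) % 2 = 0 then .inl ((p.1 + p.2) / 2, (p.1 - p.2) / 2)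
    else .inr ((p.1 + p.2 + 1) / 2, (p.1 - p.2 - 1) / 2)
  left_inv := by
    rintro (⟨a, d⟩ | ⟨a, d⟩) <;> dsimp only [Sum.elim_inl, Sum.elim_inr]
    · rw [if_pos (by omega)]
      congr 2 <;> omega
    · rw [if_neg (by omega)]
      congr 2 <;> omega
  right_inv := by
    rintro ⟨j, k⟩
    dsimp only
    by_cases h : (j - k) % 2 = 0
    · rw [if_pos h, Sum.elim_inl, Prod.mk.injEq]
      omega
    · rw [if_neg h, Sum.elim_inr, Prod.mk.injEq]
      omega

theorem parityEquiv_inl (p : ℤ × ℤ) : parityEquiv (.inl p) = (p.1 + p.2, p.1 - p.2) := rfl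

theorem parityEquiv_inr (p : ℤ × ℤ) : parityEquiv (.inr p) = (p.1 + p.2, p.1 - p.2 - 1) := rfl

theorem th_add_mul_th_sub {t : ℂ} (ht : 0 < t.im) (s w : ℂ) :
    th t (s + w) * th t (s - w) =
      thetaInt t (2 * s) * thetaHalf t (2 * w) - thetaHalf t (2 * s) * thetaInt t (2 * w) := by
  have ht2 : 0 < (2 * t).im := by simpa using ht
  have hf := summable_norm_thTerm ht (1/2) (s + w + 1/2)
  have hg := summable_norm_thTerm ht (1/2) (s - w + 1/2)
  set F : ℤ × ℤ → ℂ :=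
    fun p => thTerm t (1/2) (s + w + 1/2) p.1 * thTerm t (1/2) (s - w + 1/2) p.2
  have hF : Summable (F ∘ parityEquiv) := parityEquiv.summable_iff.mpr
    (summable_mul_of_summable_norm hf hg)
  have heven (p : ℤ × ℤ) : F (parityEquiv (.inl p)) =
      thTerm (2 * t) (1/2) (2 * s + 1) p.1 * thTerm (2 * t) 0 (2 * w) p.2 := by
    simp only [F, parityEquiv_inl, thTerm, ← exp_add]
    push_cast
    ring_nf
  have hodd (p : ℤ × ℤ) : F (parityEquiv (.inr p)) =
      thTerm (2 * t) 0 (2 * s + 1) p.1 * thTerm (2 * t) (1/2) (2 * w) p.2 := by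
    simp only [F, parityEquiv_inr, thTerm, ← exp_add]
    push_cast
    ring_nf
  have hsplit : ∑' p, F p =
      ∑' p, F (parityEquiv (.inl p)) + ∑' p, F (parityEquiv (.inr p)) := by
    rw [← parityEquiv.tsum_eq]
    exact Summable.tsum_sum (hF.comp_injective Sum.inl_injective)
      (hF.comp_injective Sum.inr_injective)
  rw [th_eq_neg_tsum_thTerm, th_eq_neg_tsum_thTerm, neg_mul_neg,
    tsum_mul_tsum_of_summable_norm hf hg]
  change ∑' p, F p = _
  rw [hsplit, tsum_congr heven, tsum_congr hodd,
    ← tsum_mul_tsum_of_summable_norm (summable_norm_thTerm ht2 _ _) (summable_norm_thTerm ht2 _ _),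
    ← tsum_mul_tsum_of_summable_norm (summable_norm_thTerm ht2 _ _) (summable_norm_thTerm ht2 _ _)]
  change thetaHalf t (2 * s + 1) * thetaInt t (2 * w) +
    thetaInt t (2 * s + 1) * thetaHalf t (2 * w) = _
  rw [thetaHalf_add_one, thetaInt_add_one]
  ring

theorem th_three_term {t : ℂ} (ht : 0 < t.im) (x y a b : ℂ) :
    th t (x + y) * th t (x - y) * (th t (a + b) * th t (a - b)) =
      th t (x + a) * th t (x - a) * (th t (y + b) * th t (y - b)) -
        th t (x + b) * th t (x - b) * (th t (y + a) * th t (y - a)) := by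
  simp only [th_add_mul_th_sub ht]
  ring

def shiftRatio (x : ℂ) : ℂ := th τ (x + η) * th τ (x - 2*η) / (th τ (x - η) * th τ x)

section

variable {τ}

theorem shiftRatio_sub_shiftRatio (hτ : 0 < τ.im) {x u : ℂ} (hx : th τ x ≠ 0)
    (hx' : th τ (x - η) ≠ 0) (hu : th τ u ≠ 0) (hu' : th τ (u - η) ≠ 0) :
    shiftRatio τ η x - shiftRatio τ η u =
      th τ η * th τ (2*η) * th τ (x + u - η) * th τ (x - u) /
        (th τ (x - η) * th τ x * (th τ (u - η) * th τ u)) := by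
  have h : th τ (x + u - η) * th τ (x - u) * (th τ (2*η) * th τ η) =
      th τ (x + η) * th τ (x - 2*η) * (th τ u * th τ (u - η)) -
        th τ x * th τ (x - η) * (th τ (u + η) * th τ (u - 2*η)) := by
    convert th_three_term hτ (x - η/2) (u - η/2) (3*η/2) (η/2) using 3 <;> ring_nf
  rw [shiftRatio, shiftRatio, div_sub_div _ _ (mul_ne_zero hx' hx) (mul_ne_zero hu' hu)]
  congr 1
  linear_combination -h

theorem shiftRatio_add_shiftRatio_neg_sub (hτ : 0 < τ.im) {x u : ℂ} (hx : th τ x ≠ 0)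
    (hx₁ : th τ (x - η) ≠ 0) (hx₂ : th τ (x + η) ≠ 0) (hu : th τ u ≠ 0)
    (hu₁ : th τ (u - η) ≠ 0) (hu₂ : th τ (u + η) ≠ 0) :
    shiftRatio τ η x + shiftRatio τ (-η) x - (shiftRatio τ η u + shiftRatio τ (-η) u) =
      th τ (2*η) ^ 2 * th τ (x + u) * th τ (x - u) /
        (th τ (x - η) * th τ (x + η) * (th τ (u - η) * th τ (u + η))) := by
  have h : th τ (x + u + η) * th τ (x - η) * (th τ (u - η) * th τ η) =
      th τ (x + u) * th τ x * (th τ u * th τ (2*η)) -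
        th τ (x + u - η) * th τ (x + η) * (th τ (u + η) * th τ η) := by
    convert th_three_term hτ (x + u/2) (u/2 + η) (u/2) (u/2 - η) using 3 <;> ring_nf
  rw [add_sub_add_comm, shiftRatio_sub_shiftRatio η hτ hx hx₁ hu hu₁,
    shiftRatio_sub_shiftRatio (-η) hτ hx (by rwa [sub_neg_eq_add]) hu (by rwa [sub_neg_eq_add])]
  simp only [mul_neg, sub_neg_eq_add, th_neg]
  field_simp
  linear_combination th τ (2*η) * th τ (x - u) * h

theorem ef_apply_neg (q u : ℂ) :
    ef τ η q (-u) = (th τ u * th τ (u + η) * (shiftRatio τ η q + shiftRatio τ (-η) q) -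
      th τ (u - η) * th τ (u + 2*η)) / (th τ η * th τ (2*η)) := by
  rw [ef, show η + -u = -(u - η) by ring, show 2*η - -u = u + 2*η by ring,
    show η - -u = u + η by ring, th_neg, th_neg]
  simp only [shiftRatio, mul_neg, sub_neg_eq_add, ← sub_eq_add_neg]
  ring

theorem gf_apply_neg (u : ℂ) :
    gf τ η (-u) = th τ (u + η) * th τ (u + 2*η) / (th τ η * th τ (2*η)) := by
  rw [gf, show -u - η = -(u + η) by ring, show -u - 2*η = -(u + 2*η) by ring, th_neg, th_neg,
    neg_mul_neg]

theorem cf_self_neg_apply_neg (q u : ℂ) :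
    cf τ η q (-q) (-u) = th τ u * th τ (u - η) * th τ (q - 2*η) * th τ (q - η) /
      (th τ η * th τ (2*η) * th τ (q + η) * th τ q) := by
  rw [cf, show q + -q - η - -u = u - η by ring, show q + -q - 2*η = -(2*η) by ring,
    show -q + η = -(q - η) by ring, th_neg, th_neg, th_neg, th_neg]
  ring

theorem cf_eta_apply_neg (q u : ℂ) :
    cf τ η q η (-u) = -(th τ u * th τ (q + u) * th τ (q - 2*η) * th τ (2*η) /
      (th τ η * th τ (q - η) * th τ (q + η) * th τ η)) := by
  rw [cf, show q + η - η - -u = q + u by ring, show q + η - 2*η = q - η by ring,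
    show η + η = 2*η by ring, th_neg]
  ring

theorem cf_eta_neg_apply_neg (q u : ℂ) :
    cf τ η η (-q) (-u) = th τ u * th τ (q - u) * th τ η * th τ (q - η) /
      (th τ η * th τ (q + η) * th τ (2*η) * th τ q) := by
  rw [cf, show η + -q - η - -u = -(q - u) by ring, show η - 2*η = -η by ring,
    show -q + η = -(q - η) by ring, show η + -q - 2*η = -(q + η) by ring,
    show η + η = 2*η by ring, th_neg, th_neg, th_neg, th_neg, th_neg, th_neg]
  ring

theorem ef_mul_cf_add_cf_mul_cf (hτ : 0 < τ.im) {q u : ℂ}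
    (hq : th τ q ≠ 0) (hq₁ : th τ (q - η) ≠ 0) (hq₂ : th τ (q + η) ≠ 0)
    (hu : th τ u ≠ 0) (hu₁ : th τ (u - η) ≠ 0) (hu₂ : th τ (u + η) ≠ 0) :
    ef τ η q (-u) * cf τ η q (-q) (-u) + cf τ η q η (-u) * cf τ η η (-q) (-u) =
      ef τ η u (-u) * cf τ η q (-q) (-u) := by
  rw [ef_apply_neg, ef_apply_neg, eq_add_of_sub_eq
    (shiftRatio_add_shiftRatio_neg_sub η hτ hq hq₁ hq₂ hu hu₁ hu₂),
    cf_self_neg_apply_neg, cf_eta_apply_neg, cf_eta_neg_apply_neg]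
  field_simp
  ring

theorem ef_apply_neg_self_div_gf (u : ℂ) (hη : th τ η ≠ 0) (h2η : th τ (2*η) ≠ 0)
    (hu : th τ u ≠ 0) (hu₂ : th τ (u + η) ≠ 0) :
    ef τ η u (-u) / gf τ η (-u) =
      th τ (u + η) * th τ (u - 2*η) / (th τ (u - η) * th τ (u + 2*η)) := by
  rw [ef_apply_neg, gf_apply_neg, div_div_div_cancel_right₀ (mul_ne_zero hη h2η)]
  simp only [shiftRatio, mul_neg, sub_neg_eq_add, ← sub_eq_add_neg]
  field_simp
  ring

end

/-- the function
`ω(q,u) = (ε(q,−u)γ(q,−q,−u) + γ(q,η,−u)γ(η,−q,−u)) / (g(−u)γ(q,−q,−u))`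
is independent of `q` and equals `ϑ(u+η)ϑ(u−2η)/(ϑ(u−η)ϑ(u+2η))`. -/
theorem omega_q_independent (τ η : ℂ) (hτ : 0 < τ.im) (hη : genEta τ η)
    (q u : ℂ) (hq : genAt τ η q) (hu : genAt τ η u) :
    (ef τ η q (-u) * cf τ η q (-q) (-u) + cf τ η q η (-u) * cf τ η η (-q) (-u)) /
        (gf τ η (-u) * cf τ η q (-q) (-u)) =
      th τ (u + η) * th τ (u - 2*η) / (th τ (u - η) * th τ (u + 2*η)) := by
  have hη₁ : th τ η ≠ 0 := by simpa using hη 1 one_ne_zero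
  have hη₂ : th τ (2*η) ≠ 0 := by simpa using hη 2 two_ne_zero
  have hq₀ : th τ q ≠ 0 := by simpa using (hq 0).1
  have hq₁ : th τ (q - η) ≠ 0 := by simpa [sub_eq_add_neg] using (hq (-1)).1
  have hq₂ : th τ (q + η) ≠ 0 := by simpa using (hq 1).1
  have hq₃ : th τ (q - 2*η) ≠ 0 := by simpa [sub_eq_add_neg] using (hq (-2)).1
  have hu₀ : th τ u ≠ 0 := by simpa using (hu 0).1
  have hu₁ : th τ (u - η) ≠ 0 := by simpa [sub_eq_add_neg] using (hu (-1)).1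
  have hu₂ : th τ (u + η) ≠ 0 := by simpa using (hu 1).1
  have hcf : cf τ η q (-q) (-u) ≠ 0 := by
    rw [cf_self_neg_apply_neg]
    simp [hη₁, hη₂, hq₀, hq₁, hq₂, hq₃, hu₀, hu₁]
  rw [ef_mul_cf_add_cf_mul_cf η hτ hq₀ hq₁ hq₂ hu₀ hu₁ hu₂, mul_div_mul_right _ _ hcf,
    ef_apply_neg_self_div_gf η u hη₁ hη₂ hu₀ hu₂]

end EtauEta
end
end

section
/- Let (𝓛,W) be a representation of E_{τ,η}(so₃) and let A₁, B₁ be the associated operators on Fun(W). Then for all u₁, u₂ (and generic q), as operators on Fun(W): A₁(u₁)B₁(u₂) = z₂₁(q)·B₁(u₂)A₁(u₁) − (α₂₁(η,q)/β₂₁(q,η))·B₁(u₁)A₁(u₂), where z₂₁(q) and α₂₁(η,q)/β₂₁(q,η) denote multiplication by the corresponding functions of q. -/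
/-!
The relation is a single component of the dynamical RLL relation. Comparing the coefficients
of `e₁ ⊗ e₁` on both sides applied to `e₂ ⊗ e₁ ⊗ w`, with the spectral parameters exchanged,
only the entries `g`, `α`, `β` of `R` survive, and one gets
`g₂₁ B₁(u₂)A₁(u₁) = α₂₁(η,q) B₁(u₁)A₁(u₂) + β₂₁(q,η) A₁(u₁)B₁(u₂)`,
first on weight vectors and then, by the weight decomposition, on all of `W`.
Dividing by `β₂₁(q,η)`, which genericity keeps nonzero, gives the claim.
-/

open scoped BigOperators Kronecker TensorProduct
open Complex

noncomputable section

namespace EtauEta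

variable (τ η : ℂ)

/-- The weights `(λ₁,λ₂,λ₃) = (1,0,−1)` of the basis vectors `e₁,e₂,e₃` of `V`. -/
def wt : Fin 3 → ℂ := ![1, 0, -1]

/-- Matrix units `E_{ij}` (0-indexed). -/
def E (i j : Fin 3) : Matrix (Fin 3) (Fin 3) ℂ := Matrix.single i j 1

/-- The `R`-matrix `R(q,u)` of `E_{τ,η}(so₃)`, as an endomorphism of `V ⊗ V`
(identified with matrices indexed by `Fin 3 × Fin 3`). -/
def Rm (q u : ℂ) : Matrix (Fin 3 × Fin 3) (Fin 3 × Fin 3) ℂ :=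
  gf τ η u • (E 0 0 ⊗ₖ E 0 0) + gf τ η u • (E 2 2 ⊗ₖ E 2 2) + ef τ η q u • (E 1 1 ⊗ₖ E 1 1)
  + af τ η η q u • (E 0 1 ⊗ₖ E 1 0) + af τ η q η u • (E 1 0 ⊗ₖ E 0 1)
  + af τ η (-q) η u • (E 1 2 ⊗ₖ E 2 1) + af τ η η (-q) u • (E 2 1 ⊗ₖ E 1 2)
  + bf τ η η q u • (E 0 0 ⊗ₖ E 1 1) + bf τ η q η u • (E 1 1 ⊗ₖ E 0 0)
  + bf τ η (-q) η u • (E 1 1 ⊗ₖ E 2 2) + bf τ η η (-q) u • (E 2 2 ⊗ₖ E 1 1)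
  + cf τ η (-q) q u • (E 0 0 ⊗ₖ E 2 2) + cf τ η (-q) η u • (E 0 1 ⊗ₖ E 2 1)
  - cf τ η η q u • (E 1 0 ⊗ₖ E 1 2)
  + cf τ η q (-q) u • (E 2 2 ⊗ₖ E 0 0) + cf τ η q η u • (E 2 1 ⊗ₖ E 0 1)
  - cf τ η η (-q) u • (E 1 2 ⊗ₖ E 1 0)
  + df τ η q u • (E 2 0 ⊗ₖ E 0 2) + df τ η (-q) u • (E 0 2 ⊗ₖ E 2 0)

variable {W : Type*} [AddCommGroup W] [Module ℂ W]

/-- Zero-weight condition for the blocks `L q u i j ∈ End(W)` of a Lax operator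
`𝓛(q,u) ∈ End(V ⊗ W)` (for generic `q`): `L q u i j` maps `W[μ]` to `W[μ + λ_j − λ_i]`. -/
def ZeroWt (wsp : ℂ → Submodule ℂ W)
    (L : ℂ → ℂ → Fin 3 → Fin 3 → Module.End ℂ W) : Prop :=
  ∀ q, genAt τ η q → ∀ (u : ℂ) (i j : Fin 3) (μ : ℂ), ∀ w ∈ wsp μ,
    L q u i j w ∈ wsp (μ + wt j - wt i)

/-- The dynamical RLL relation
`R₁₂(q−2ηh₃,u₁−u₂)𝓛₁₃(q,u₁)𝓛₂₃(q−2ηh₁,u₂) = 𝓛₂₃(q,u₂)𝓛₁₃(q−2ηh₂,u₁)R₁₂(q,u₁−u₂)`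
in `End(V ⊗ V ⊗ W)`, written in block form on a pure tensor `e_a ⊗ e_b ⊗ w` with
`w ∈ W[μ]` a weight vector, comparing the components along `e_k ⊗ e_l` (for generic `q`). -/
def RLLrel (wsp : ℂ → Submodule ℂ W)
    (L : ℂ → ℂ → Fin 3 → Fin 3 → Module.End ℂ W) : Prop :=
  ∀ q, genAt τ η q → ∀ (u₁ u₂ : ℂ) (a b k l : Fin 3) (μ : ℂ), ∀ w ∈ wsp μ,
    (∑ i : Fin 3, ∑ j : Fin 3,
      Rm τ η (q - 2*η*(μ + wt a + wt b - wt i - wt j)) (u₁ - u₂) (k, l) (i, j) •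
        L q u₁ i a (L (q - 2*η * wt a) u₂ j b w))
    = ∑ i : Fin 3, ∑ j : Fin 3,
        Rm τ η q (u₁ - u₂) (i, j) (a, b) •
          L q u₂ l j (L (q - 2*η * wt j) u₁ k i w)

open scoped Classical in
/-- A representation of the elliptic quantum group `E_{τ,η}(so₃)`: a module `W` with a
weight decomposition `W = ⊕_λ W[λ]`, together with the blocks `L q u i j` of a
zero-weight Lax operator `𝓛(q,u) ∈ End(V ⊗ W)` satisfying the dynamical RLL relation. -/
def IsRep (wsp : ℂ → Submodule ℂ W)
    (L : ℂ → ℂ → Fin 3 → Fin 3 → Module.End ℂ W) : Prop :=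
  DirectSum.IsInternal wsp ∧ ZeroWt τ η wsp L ∧ RLLrel τ η wsp L

/-- The operators `L_{ij}(u)` of the operator algebra acting on `Fun(W)`:
`(L_{ij}(u)f)(q) = 𝓛_{ij}(q,u) f(q − 2ηλ_j)`.  In particular
`A₁(u) = Lop η L 0 0 u`, `B₁(u) = Lop η L 0 1 u`, `B₂(u) = Lop η L 0 2 u`. -/
def Lop (L : ℂ → ℂ → Fin 3 → Fin 3 → Module.End ℂ W) (i j : Fin 3) (u : ℂ) :
    (ℂ → W) → ℂ → W :=
  fun f q => L q u i j (f (q - 2*η * wt j))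

/-- The transfer matrix acting on `Fun(W)`: `(t(u)f)(q) = ∑ᵢ 𝓛_{ii}(q,u) f(q − 2ηλ_i)`. -/
def tmat (L : ℂ → ℂ → Fin 3 → Fin 3 → Module.End ℂ W) (u : ℂ) (f : ℂ → W) : ℂ → W :=
  fun q => ∑ i : Fin 3, L q u i i (f (q - 2*η * wt i))

section

variable {τ η}

theorem _root_.Submodule.linearMap_ext_of_iSup_eq_top {R M N ι : Type*} [Semiring R]
    [AddCommMonoid M] [Module R M] [AddCommMonoid N] [Module R N] {p : ι → Submodule R M}
    (hp : ⨆ i, p i = ⊤) {f g : M →ₗ[R] N} (h : ∀ i, ∀ x ∈ p i, f x = g x) : f = g :=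
  LinearMap.ext fun x ↦ Submodule.iSup_induction p (motive := fun x ↦ f x = g x)
    (hp ▸ Submodule.mem_top) h (by simp) fun x y hx hy ↦ by simp [hx, hy]

@[simp] theorem wt_zero : wt 0 = 1 := rfl

@[simp] theorem wt_one : wt 1 = 0 := rfl

theorem genAt.neg {x : ℂ} (hx : genAt τ η x) : genAt τ η (-x) :=
  fun m ↦ by simpa only [neg_neg] using (hx m).symm

theorem bf_ne_zero (hη : genEta τ η) {q u : ℂ} (hq : genAt τ η q) (hu : genAt τ η u) :
    bf τ η q η u ≠ 0 := by
  have h₁ := (hu 1).2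
  have h₂ := (hu 0).1
  have h₃ := (hq (-1)).1
  have h₄ := hη (-2) (by norm_num)
  have h₅ := hη 1 one_ne_zero
  have h₆ := (hq 1).1
  push_cast at h₁ h₂ h₃ h₄ h₅ h₆
  rw [zero_mul, add_zero] at h₂
  rw [one_mul] at h₁ h₅ h₆
  rw [bf, show η - u = -u + η by ring, show q + η - 2 * η = q + -1 * η by ring,
    show -(2 * η) = -2 * η by ring]
  exact div_ne_zero (mul_ne_zero (mul_ne_zero h₁ h₂) h₃) (mul_ne_zero (mul_ne_zero h₄ h₅) h₆)

variable {W : Type*} [AddCommGroup W] [Module ℂ W] {wsp : ℂ → Submodule ℂ W}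
  {L : ℂ → ℂ → Fin 3 → Fin 3 → Module.End ℂ W}

theorem RLLrel.exchange_A1_B1_apply_of_mem (hRLL : RLLrel τ η wsp L) {q : ℂ}
    (hq : genAt τ η q) (u₁ u₂ : ℂ) {μ : ℂ} {w : W} (hw : w ∈ wsp μ) :
    gf τ η (u₂ - u₁) • L q u₂ 0 1 (L q u₁ 0 0 w) =
      af τ η η q (u₂ - u₁) • L q u₁ 0 1 (L q u₂ 0 0 w) +
        bf τ η q η (u₂ - u₁) • L q u₁ 0 0 (L (q - 2*η) u₂ 0 1 w) := by
  simpa [Fin.sum_univ_three, Rm, E, Matrix.single] using hRLL q hq u₂ u₁ 1 0 0 0 μ w hw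

theorem IsRep.exchange_A1_B1 (hrep : IsRep τ η wsp L) {q : ℂ} (hq : genAt τ η q)
    (u₁ u₂ : ℂ) :
    gf τ η (u₂ - u₁) • (L q u₂ 0 1 * L q u₁ 0 0) =
      af τ η η q (u₂ - u₁) • (L q u₁ 0 1 * L q u₂ 0 0) +
        bf τ η q η (u₂ - u₁) • (L q u₁ 0 0 * L (q - 2*η) u₂ 0 1) :=
  Submodule.linearMap_ext_of_iSup_eq_top hrep.1.submodule_iSup_eq_top fun _ _ hw ↦
    hrep.2.2.exchange_A1_B1_apply_of_mem hq u₁ u₂ hw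

end

theorem crA1B1_general (τ η : ℂ) (hη : genEta τ η)
    {W : Type*} [AddCommGroup W] [Module ℂ W]
    (wsp : ℂ → Submodule ℂ W) (L : ℂ → ℂ → Fin 3 → Fin 3 → Module.End ℂ W)
    (hrep : IsRep τ η wsp L)
    (u₁ u₂ : ℂ) (hu : genAt τ η (u₁ - u₂)) (q : ℂ) (hq : genAt τ η q) (f : ℂ → W) :
    Lop η L 0 0 u₁ (Lop η L 0 1 u₂ f) q =
      zf τ η q (u₂ - u₁) • Lop η L 0 1 u₂ (Lop η L 0 0 u₁ f) q -
        (af τ η η q (u₂ - u₁) / bf τ η q η (u₂ - u₁)) •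
          Lop η L 0 1 u₁ (Lop η L 0 0 u₂ f) q := by
  have hb : bf τ η q η (u₂ - u₁) ≠ 0 := bf_ne_zero hη hq (by simpa using hu.neg)
  have key := LinearMap.congr_fun (hrep.exchange_A1_B1 hq u₁ u₂) (f (q - 2 * η))
  simp only [LinearMap.smul_apply, LinearMap.add_apply, Module.End.mul_apply] at key
  simp only [Lop, wt_zero, wt_one, mul_one, mul_zero, sub_zero]
  rw [zf, div_eq_inv_mul, div_eq_inv_mul, mul_smul, mul_smul, ← smul_sub, key,
    add_sub_cancel_left, inv_smul_smul₀ hb]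

/-- the commutation relation
`A₁(u₁)B₁(u₂) = z₂₁(q)B₁(u₂)A₁(u₁) − (α₂₁(η,q)/β₂₁(q,η))B₁(u₁)A₁(u₂)`
as operators on `Fun(W)` (for generic `q`). -/
theorem crA1B1 (τ η : ℂ) (hτ : 0 < τ.im) (hη : genEta τ η)
    {W : Type*} [AddCommGroup W] [Module ℂ W]
    (wsp : ℂ → Submodule ℂ W) (L : ℂ → ℂ → Fin 3 → Fin 3 → Module.End ℂ W)
    (hrep : IsRep τ η wsp L)
    (u₁ u₂ : ℂ) (hu : genAt τ η (u₁ - u₂)) (q : ℂ) (hq : genAt τ η q) (f : ℂ → W) :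
    Lop η L 0 0 u₁ (Lop η L 0 1 u₂ f) q =
      zf τ η q (u₂ - u₁) • Lop η L 0 1 u₂ (Lop η L 0 0 u₁ f) q -
        (af τ η η q (u₂ - u₁) / bf τ η q η (u₂ - u₁)) •
          Lop η L 0 1 u₁ (Lop η L 0 0 u₂ f) q :=
  crA1B1_general τ η hη wsp L hrep u₁ u₂ hu q hq f

end EtauEta
end
end

section
/- Let (𝓛,W) be a representation of E_{τ,η}(so₃) and let B₁, B₂ be the associated operators on Fun(W). Then for all u₁, u₂ (and generic q), as operators on Fun(W): B₁(u₂)B₂(u₁) = (1/g₂₁)·( β₂₁(−q,η)·B₂(u₁)B₁(u₂) + α₂₁(η,−q)·B₁(u₁)B₂(u₂) ), where β₂₁(−q,η) and α₂₁(η,−q) denote multiplication by the corresponding functions of q and g₂₁ is a scalar. -/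
/-!
Take the component along `e₁ ⊗ e₁` of the RLL relation applied to `e₂ ⊗ e₃ ⊗ w` with the spectral
parameters interchanged. On the left only the entry `g` of `R` survives, so the dynamical shift
of `R` plays no role; on the right only the entries `β(−q,η)` (at `e₂ ⊗ e₃`) and `α(η,−q)`
(from `e₂ ⊗ e₃` to `e₃ ⊗ e₂`) do. This is the exchange relation multiplied by `g₂₁`, on every
weight vector, hence on all of `W` since the weight spaces span it.
-/

open scoped BigOperators Kronecker TensorProduct
open Complex

noncomputable section

namespace EtauEta

variable (τ η : ℂ)

variable {W : Type*} [AddCommGroup W] [Module ℂ W]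

theorem _root_.LinearMap.ext_of_iSup_eq_top {R M N ι : Type*} [Semiring R] [AddCommMonoid M]
    [AddCommMonoid N] [Module R M] [Module R N] {p : ι → Submodule R M} (hp : ⨆ i, p i = ⊤)
    {f g : M →ₗ[R] N} (h : ∀ i, ∀ x ∈ p i, f x = g x) : f = g :=
  LinearMap.eqLocus_eq_top.1 <| top_le_iff.1 <| hp ▸ iSup_le fun i => LinearMap.le_eqLocus.2 (h i)

theorem genAt_neg {x : ℂ} : genAt τ η (-x) ↔ genAt τ η x := by
  simp only [genAt, neg_neg, and_comm]

theorem gf_ne_zero (hη : genEta τ η) {u : ℂ} (hu : genAt τ η u) : gf τ η u ≠ 0 := by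
  refine div_ne_zero (mul_ne_zero ?_ ?_) (mul_ne_zero ?_ ?_)
  · convert (hu (-1)).1 using 2; push_cast; ring
  · convert (hu (-2)).1 using 2; push_cast; ring
  · convert hη 1 one_ne_zero using 2; push_cast; ring
  · convert hη 2 two_ne_zero using 2; push_cast; ring

theorem RLLrel.exchange_B₁_B₂_apply {wsp : ℂ → Submodule ℂ W}
    {L : ℂ → ℂ → Fin 3 → Fin 3 → Module.End ℂ W} (hRLL : RLLrel τ η wsp L)
    (u₁ u₂ q : ℂ) (hq : genAt τ η q) {μ : ℂ} {w : W} (hw : w ∈ wsp μ) :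
    gf τ η (u₂ - u₁) • L q u₂ 0 1 (L q u₁ 0 2 w) =
      bf τ η (-q) η (u₂ - u₁) • L q u₁ 0 2 (L (q + 2*η) u₂ 0 1 w) +
        af τ η η (-q) (u₂ - u₁) • L q u₁ 0 1 (L q u₂ 0 2 w) := by
  simpa [Fin.sum_univ_three, Rm, wt, E, Matrix.single] using hRLL q hq u₂ u₁ 1 2 0 0 μ w hw

theorem IsRep.exchange_B₁_B₂ {wsp : ℂ → Submodule ℂ W}
    {L : ℂ → ℂ → Fin 3 → Fin 3 → Module.End ℂ W} (hrep : IsRep τ η wsp L)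
    (u₁ u₂ q : ℂ) (hq : genAt τ η q) :
    gf τ η (u₂ - u₁) • (L q u₂ 0 1 * L q u₁ 0 2) =
      bf τ η (-q) η (u₂ - u₁) • (L q u₁ 0 2 * L (q + 2*η) u₂ 0 1) +
        af τ η η (-q) (u₂ - u₁) • (L q u₁ 0 1 * L q u₂ 0 2) :=
  LinearMap.ext_of_iSup_eq_top hrep.1.submodule_iSup_eq_top fun _ _ hw =>
    hrep.2.2.exchange_B₁_B₂_apply τ η u₁ u₂ q hq hw

theorem crB1B2_general (τ η : ℂ) (hη : genEta τ η)
    {W : Type*} [AddCommGroup W] [Module ℂ W]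
    (wsp : ℂ → Submodule ℂ W) (L : ℂ → ℂ → Fin 3 → Fin 3 → Module.End ℂ W)
    (hrep : IsRep τ η wsp L)
    (u₁ u₂ : ℂ) (hu : genAt τ η (u₁ - u₂)) (q : ℂ) (hq : genAt τ η q) (f : ℂ → W) :
    Lop η L 0 1 u₂ (Lop η L 0 2 u₁ f) q =
      (gf τ η (u₂ - u₁))⁻¹ •
        (bf τ η (-q) η (u₂ - u₁) • Lop η L 0 2 u₁ (Lop η L 0 1 u₂ f) q +
          af τ η η (-q) (u₂ - u₁) • Lop η L 0 1 u₁ (Lop η L 0 2 u₂ f) q) := by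
  have hg : gf τ η (u₂ - u₁) ≠ 0 :=
    gf_ne_zero τ η hη (by rw [← neg_sub]; exact (genAt_neg τ η).2 hu)
  have hw₁ : 2 * η * wt 1 = 0 := by simp [wt]
  have hw₂ : 2 * η * wt 2 = -(2 * η) := by simp [wt]
  have key := LinearMap.congr_fun (hrep.exchange_B₁_B₂ τ η u₁ u₂ q hq) (f (q + 2 * η))
  simp only [LinearMap.smul_apply, LinearMap.add_apply, Module.End.mul_apply] at key
  simp only [Lop, hw₁, hw₂, sub_zero, sub_neg_eq_add]
  rw [← key, inv_smul_smul₀ hg]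

/-- the commutation relation
`B₁(u₂)B₂(u₁) = (1/g₂₁)(β₂₁(−q,η)B₂(u₁)B₁(u₂) + α₂₁(η,−q)B₁(u₁)B₂(u₂))`
as operators on `Fun(W)` (for generic `q`). -/
theorem crB1B2 (τ η : ℂ) (hτ : 0 < τ.im) (hη : genEta τ η)
    {W : Type*} [AddCommGroup W] [Module ℂ W]
    (wsp : ℂ → Submodule ℂ W) (L : ℂ → ℂ → Fin 3 → Fin 3 → Module.End ℂ W)
    (hrep : IsRep τ η wsp L)
    (u₁ u₂ : ℂ) (hu : genAt τ η (u₁ - u₂)) (q : ℂ) (hq : genAt τ η q) (f : ℂ → W) :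
    Lop η L 0 1 u₂ (Lop η L 0 2 u₁ f) q =
      (gf τ η (u₂ - u₁))⁻¹ •
        (bf τ η (-q) η (u₂ - u₁) • Lop η L 0 2 u₁ (Lop η L 0 1 u₂ f) q +
          af τ η η (-q) (u₂ - u₁) • Lop η L 0 1 u₁ (Lop η L 0 2 u₂ f) q) :=
  crB1B2_general τ η hη wsp L hrep u₁ u₂ hu q hq f

end EtauEta
end
end

section
/- Let (𝓛,W) be a representation of E_{τ,η}(so₃) and let B₁, B₂ be the associated operators on Fun(W). Then for all u₁, u₂ (and generic q), as operators on Fun(W): B₂(u₂)B₁(u₁) = (1/g₂₁)·( β₂₁(η,−q)·B₁(u₁)B₂(u₂) + α₂₁(−q,η)·B₂(u₁)B₁(u₂) ), where β₂₁(η,−q) and α₂₁(−q,η) denote multiplication by the corresponding functions of q and g₂₁ is a scalar. -/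
open scoped BigOperators Kronecker TensorProduct
open Complex

noncomputable section

namespace EtauEta

variable (τ η : ℂ)

variable {W : Type*} [AddCommGroup W] [Module ℂ W]

lemma gf_neg_ne_zero (hη : genEta τ η) {u : ℂ} (hu : genAt τ η u) : gf τ η (-u) ≠ 0 := by
  have hshift (m : ℤ) : th τ (-u - m * η) ≠ 0 := by
    simpa [sub_eq_add_neg, ← neg_mul] using (hu (-m)).2
  refine div_ne_zero (mul_ne_zero ?_ ?_) (mul_ne_zero ?_ ?_)
  · simpa using hshift 1
  · simpa using hshift 2
  · simpa using hη 1 one_ne_zero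
  · simpa using hη 2 two_ne_zero

lemma Rm_row_zero_zero (q u : ℂ) (i j : Fin 3) :
    Rm τ η q u (0, 0) (i, j) = if i = 0 ∧ j = 0 then gf τ η u else 0 := by
  fin_cases i <;> fin_cases j <;> simp [Rm, E]

lemma Rm_col_two_one (q u : ℂ) (i j : Fin 3) :
    Rm τ η q u (i, j) (2, 1) =
      if i = 1 ∧ j = 2 then af τ η (-q) η u else if i = 2 ∧ j = 1 then bf τ η η (-q) u else 0 := by
  fin_cases i <;> fin_cases j <;> simp [Rm, E]

section Exchange

variable {τ η} {wsp : ℂ → Submodule ℂ W} {L : ℂ → ℂ → Fin 3 → Fin 3 → Module.End ℂ W}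
  (u₁ u₂ q : ℂ)

/-- The RLL component along `e₁ ⊗ e₁` of `e₃ ⊗ e₂ ⊗ w`: only `g` survives in the row `(e₁, e₁)`
of `R`, and only `α`, `β` in the column `(e₃, e₂)`. -/
lemma rll_B2B1_of_mem (hrll : RLLrel τ η wsp L) (hq : genAt τ η q) {μ : ℂ} {w : W}
    (hw : w ∈ wsp μ) :
    gf τ η (u₂ - u₁) • L q u₂ 0 2 (L (q + 2*η) u₁ 0 1 w) =
      af τ η (-q) η (u₂ - u₁) • L q u₁ 0 2 (L (q + 2*η) u₂ 0 1 w) +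
        bf τ η η (-q) (u₂ - u₁) • L q u₁ 0 1 (L q u₂ 0 2 w) := by
  have h := hrll q hq u₂ u₁ 2 1 0 0 μ w hw
  simp only [Fin.sum_univ_three, Rm_row_zero_zero, Rm_col_two_one] at h
  simpa [wt] using h

lemma rll_B2B1 (hrll : RLLrel τ η wsp L) (hspan : ⨆ μ, wsp μ = ⊤) (hq : genAt τ η q) :
    gf τ η (u₂ - u₁) • (L q u₂ 0 2 ∘ₗ L (q + 2*η) u₁ 0 1) =
      af τ η (-q) η (u₂ - u₁) • (L q u₁ 0 2 ∘ₗ L (q + 2*η) u₂ 0 1) +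
        bf τ η η (-q) (u₂ - u₁) • (L q u₁ 0 1 ∘ₗ L q u₂ 0 2) := by
  refine LinearMap.ext_on (s := ⋃ μ, (wsp μ : Set W)) ?_ ?_
  · rwa [← Submodule.iSup_eq_span]
  · rintro w ⟨_, ⟨μ, rfl⟩, hw⟩
    exact rll_B2B1_of_mem u₁ u₂ q hrll hq hw

end Exchange

theorem crB2B1_general (τ η : ℂ) (hη : genEta τ η)
    {W : Type*} [AddCommGroup W] [Module ℂ W]
    (wsp : ℂ → Submodule ℂ W) (L : ℂ → ℂ → Fin 3 → Fin 3 → Module.End ℂ W)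
    (hrep : IsRep τ η wsp L)
    (u₁ u₂ : ℂ) (hu : genAt τ η (u₁ - u₂)) (q : ℂ) (hq : genAt τ η q) (f : ℂ → W) :
    Lop η L 0 2 u₂ (Lop η L 0 1 u₁ f) q =
      (gf τ η (u₂ - u₁))⁻¹ •
        (bf τ η η (-q) (u₂ - u₁) • Lop η L 0 1 u₁ (Lop η L 0 2 u₂ f) q +
          af τ η (-q) η (u₂ - u₁) • Lop η L 0 2 u₁ (Lop η L 0 1 u₂ f) q) := by
  obtain ⟨hint, -, hrll⟩ := hrep
  have hg : gf τ η (u₂ - u₁) ≠ 0 := by simpa using gf_neg_ne_zero τ η hη hu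
  have hexch := LinearMap.congr_fun
    (rll_B2B1 u₁ u₂ q hrll hint.submodule_iSup_eq_top hq) (f (q + 2*η))
  rw [eq_inv_smul_iff₀ hg, add_comm]
  simpa [Lop, wt] using hexch

/-- the commutation relation
`B₂(u₂)B₁(u₁) = (1/g₂₁)(β₂₁(η,−q)B₁(u₁)B₂(u₂) + α₂₁(−q,η)B₂(u₁)B₁(u₂))`
as operators on `Fun(W)` (for generic `q`). -/
theorem crB2B1 (τ η : ℂ) (hτ : 0 < τ.im) (hη : genEta τ η)
    {W : Type*} [AddCommGroup W] [Module ℂ W]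
    (wsp : ℂ → Submodule ℂ W) (L : ℂ → ℂ → Fin 3 → Fin 3 → Module.End ℂ W)
    (hrep : IsRep τ η wsp L)
    (u₁ u₂ : ℂ) (hu : genAt τ η (u₁ - u₂)) (q : ℂ) (hq : genAt τ η q) (f : ℂ → W) :
    Lop η L 0 2 u₂ (Lop η L 0 1 u₁ f) q =
      (gf τ η (u₂ - u₁))⁻¹ •
        (bf τ η η (-q) (u₂ - u₁) • Lop η L 0 1 u₁ (Lop η L 0 2 u₂ f) q +
          af τ η (-q) η (u₂ - u₁) • Lop η L 0 2 u₁ (Lop η L 0 1 u₂ f) q) :=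
  crB2B1_general τ η hη wsp L hrep u₁ u₂ hu q hq f

end EtauEta
end
end
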